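/- arXiv:2404.02458 — 2 statements merged into one kernel-verified Lean document; each statement's English description precedes it below -/
import Mathlib

section
/- On a rooted tree with nonnegative edge weights r_{hk} ≥ 0, the matrix R̃ defined by R̃_{ij} := Σ_{(h,k) ∈ L_i ∩ L_j} r_{hk} (where L_i is the edge set of the path from the root to node i) is symmetric and positive semidefinite; it is positive definite if every edge weight is strictly positive. -/
/-!
Let `A` be the edge-by-node incidence matrix of root paths, `A e i = 1` iff edge `e` lies on the
path to node `i`. Then `R̃ = Aᵀ diag(r) A`, which is positive semidefinite for `r ≥ 0`. Since a
parent carries a smaller label than its child, the path to node `i` only uses edges `≤ i` and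
always uses edge `i`, so `A` is unitriangular; being invertible, it preserves definiteness of
`diag(r)` when `r > 0`.
-/

open Matrix Finset

section IncidenceGram

variable {m n α : Type*} [Fintype m] [DecidableEq m] [DecidableEq α]

def incidenceMatrix (ε : m → α) (S : n → Finset α) : Matrix m n ℝ :=
  of fun e i => if ε e ∈ S i then 1 else 0

theorem sum_inter_eq_incidenceMatrix_gram (ε : m ↪ α) (S : n → Finset α)
    (hS : ∀ i, ↑(S i) ⊆ Set.range ε) (w : α → ℝ) (i j : n) :
    ∑ a ∈ S i ∩ S j, w a =
      ((incidenceMatrix ε S)ᴴ * diagonal (w ∘ ε) * incidenceMatrix ε S) i j := by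
  have hcover : univ.map ε ∩ (S i ∩ S j) = S i ∩ S j :=
    inter_eq_right.mpr fun a ha => by
      obtain ⟨e, rfl⟩ := hS i (mem_inter.mp ha).1
      exact mem_map_of_mem _ (mem_univ e)
  rw [← hcover, ← sum_ite_mem, sum_map, mul_apply]
  simp only [mul_diagonal, conjTranspose_apply, incidenceMatrix, of_apply,
    star_trivial, Function.comp_apply, mem_inter]
  refine sum_congr rfl fun e _ => ?_
  split_ifs <;> simp_all

end IncidenceGram

section RootedTree

variable {B : ℕ} {p : ℕ → ℕ} {path : ℕ → Finset ℕ}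

def edgeEmbedding (B : ℕ) : Fin B ↪ ℕ :=
  ⟨fun e => e.val + 1, fun _ _ h => Fin.ext (Nat.succ_injective h)⟩

@[simp]
theorem edgeEmbedding_apply (e : Fin B) : edgeEmbedding B e = e.val + 1 := rfl

theorem range_edgeEmbedding (B : ℕ) : Set.range (edgeEmbedding B) = ↑(Icc 1 B) := by
  ext a
  simp only [Set.mem_range, edgeEmbedding_apply, coe_Icc, Set.mem_Icc]
  constructor
  · rintro ⟨e, rfl⟩
    exact ⟨Nat.le_add_left 1 _, e.isLt⟩
  · rintro ⟨h1, h2⟩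
    exact ⟨⟨a - 1, by omega⟩, by simp only; omega⟩

theorem path_subset_Icc (hp : ∀ j ∈ Icc 1 B, p j < j) (hpath0 : path 0 = ∅)
    (hpath : ∀ j ∈ Icc 1 B, path j = insert j (path (p j))) :
    ∀ j ≤ B, path j ⊆ Icc 1 j := by
  intro j
  induction j using Nat.strong_induction_on with
  | _ j ih =>
    intro hjB
    rcases Nat.eq_zero_or_pos j with rfl | hj
    · simp [hpath0]
    have hjI : j ∈ Icc 1 B := mem_Icc.mpr ⟨hj, hjB⟩
    have hpj := hp j hjI
    rw [hpath j hjI]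
    refine insert_subset (mem_Icc.mpr ⟨hj, le_rfl⟩) ?_
    exact (ih (p j) hpj (hpj.le.trans hjB)).trans (Icc_subset_Icc_right hpj.le)

variable (B path) in
def pathIncidence : Matrix (Fin B) (Fin B) ℝ :=
  incidenceMatrix (edgeEmbedding B) fun i : Fin B => path (i.val + 1)

theorem det_pathIncidence (hp : ∀ j ∈ Icc 1 B, p j < j) (hpath0 : path 0 = ∅)
    (hpath : ∀ j ∈ Icc 1 B, path j = insert j (path (p j))) :
    (pathIncidence B path).det = 1 := by
  have hupper : (pathIncidence B path).IsUpperTriangular := by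
    intro e i hie
    have hlt : i.val < e.val := hie
    have hnot : e.val + 1 ∉ path (i.val + 1) := fun h =>
      absurd (mem_Icc.mp (path_subset_Icc hp hpath0 hpath _ i.isLt h)).2 (by omega)
    simp [pathIncidence, incidenceMatrix, hnot]
  rw [det_of_isUpperTriangular hupper]
  refine prod_eq_one fun i _ => ?_
  have hself : i.val + 1 ∈ path (i.val + 1) := by
    rw [hpath _ (mem_Icc.mpr ⟨Nat.le_add_left 1 _, i.isLt⟩)]
    exact mem_insert_self _ _
  simp [pathIncidence, incidenceMatrix, hself]

end RootedTree

/-- The mutual path-resistance matrix of a rooted tree is symmetric and PSD,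
and positive definite when all edge weights are strictly positive.
Non-root nodes are `1,…,B` with parent `p j < j`; the edge into node `j` is
identified with `j`, and `path i` is the edge set of the root-to-`i` path. -/
theorem stmt_10 (B : ℕ) (p : ℕ → ℕ)
    (hp : ∀ j ∈ Finset.Icc 1 B, p j < j)
    (path : ℕ → Finset ℕ)
    (hpath0 : path 0 = ∅)
    (hpath : ∀ j ∈ Finset.Icc 1 B, path j = insert j (path (p j)))
    (r : ℕ → ℝ) (hr : ∀ e ∈ Finset.Icc 1 B, 0 ≤ r e)
    (M : Matrix (Fin B) (Fin B) ℝ)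
    (hM : ∀ i j : Fin B,
      M i j = ∑ e ∈ path (i.val + 1) ∩ path (j.val + 1), r e) :
    M.IsSymm ∧ M.PosSemidef ∧
      ((∀ e ∈ Finset.Icc 1 B, 0 < r e) → M.PosDef) := by
  set A := pathIncidence B path
  have hedge : ∀ e, edgeEmbedding B e ∈ Icc 1 B := fun e =>
    mem_coe.mp (range_edgeEmbedding B ▸ Set.mem_range_self e)
  have hgram : M = Aᴴ * diagonal (r ∘ edgeEmbedding B) * A := by
    ext i j
    rw [hM]
    refine sum_inter_eq_incidenceMatrix_gram (edgeEmbedding B) (fun i : Fin B => path (i.val + 1))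
      (fun i => ?_) r i j
    rw [range_edgeEmbedding, coe_subset]
    exact (path_subset_Icc hp hpath0 hpath _ i.isLt).trans (Icc_subset_Icc_right i.isLt)
  have hpsd : M.PosSemidef := hgram ▸
    (posSemidef_diagonal_iff.mpr fun e => hr _ (hedge e)).conjTranspose_mul_mul_same A
  refine ⟨isHermitian_iff_isSymm.mp hpsd.isHermitian, hpsd, fun hrpos => hgram ▸ ?_⟩
  have hA : Function.Injective A.mulVec := (mulVec_injective_iff_isUnit (A := A)).mpr <|
    (isUnit_iff_isUnit_det A).mpr (det_pathIncidence hp hpath0 hpath ▸ isUnit_one)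
  exact (posDef_diagonal_iff.mpr fun e => hrpos _ (hedge e)).conjTranspose_mul_mul_same hA
end

section
/- Let d* maximize the concave function d ↦ Σₙ Uₙ(dₙ) − π⁺·(Σₙ dₙ − G₀) over the box Πₙ[d̲ₙ, d̄ₙ], where each Uₙ is strictly concave and differentiable with strictly decreasing derivative Lₙ and inverse fₙ. If Σₙ max(d̲ₙ, min(fₙ(π⁺), d̄ₙ)) > G₀ (i.e., G₀ < σ₁), then d* also satisfies the constraint Σₙ dₙ − G₀ ≥ 0, and hence d* is optimal for the constrained problem P_{Z≥0}. -/
/-- Tangent line inequality for a differentiable function with strictly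
decreasing derivative. -/
lemma tangent_le (U L : ℝ → ℝ) (hdiff : Differentiable ℝ U)
    (hL : ∀ d, deriv U d = L d) (hLanti : StrictAnti L) (c d : ℝ) :
    U d ≤ U c + L c * (d - c) := by
  rcases lt_trichotomy d c with h | h | h
  · obtain ⟨ξ, hξ, hs⟩ := exists_deriv_eq_slope U h
      (hdiff.continuous.continuousOn) (fun x _ => (hdiff x).differentiableWithinAt)
    rw [hL] at hs
    have h1 : L c < L ξ := hLanti hξ.2
    have h2 : U c - U d = L ξ * (c - d) :=
      (div_eq_iff (sub_ne_zero.mpr (ne_of_gt h))).mp hs.symm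
    nlinarith [hξ.1, hξ.2]
  · simp [h]
  · obtain ⟨ξ, hξ, hs⟩ := exists_deriv_eq_slope U h
      (hdiff.continuous.continuousOn) (fun x _ => (hdiff x).differentiableWithinAt)
    rw [hL] at hs
    have h1 : L ξ < L c := hLanti hξ.1
    have h2 : U d - U c = L ξ * (d - c) :=
      (div_eq_iff (sub_ne_zero.mpr (ne_of_gt h))).mp hs.symm
    nlinarith [hξ.1, hξ.2]

theorem stmt_14 (N : ℕ) (U L f : Fin N → ℝ → ℝ)
    (hU : ∀ n, StrictConcaveOn ℝ Set.univ (U n))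
    (hdiff : ∀ n, Differentiable ℝ (U n))
    (hL : ∀ n d, deriv (U n) d = L n d)
    (hLanti : ∀ n, StrictAnti (L n))
    (hinv : ∀ n x, L n (f n x) = x)
    (πp G₀ : ℝ) (dlo dhi dstar : Fin N → ℝ)
    (hmem : ∀ n, dstar n ∈ Set.Icc (dlo n) (dhi n))
    (hopt : ∀ d : Fin N → ℝ, (∀ n, d n ∈ Set.Icc (dlo n) (dhi n)) →
      (∑ n, U n (d n)) - πp * ((∑ n, d n) - G₀) ≤
        (∑ n, U n (dstar n)) - πp * ((∑ n, dstar n) - G₀))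
    (hσ : G₀ < ∑ n, max (dlo n) (min (f n πp) (dhi n))) :
    0 ≤ (∑ n, dstar n) - G₀ ∧
    ∀ d : Fin N → ℝ, (∀ n, d n ∈ Set.Icc (dlo n) (dhi n)) →
      0 ≤ (∑ n, d n) - G₀ →
      (∑ n, U n (d n)) - πp * ((∑ n, d n) - G₀) ≤
        (∑ n, U n (dstar n)) - πp * ((∑ n, dstar n) - G₀) := by
  classical
  set clip : Fin N → ℝ := fun n => max (dlo n) (min (f n πp) (dhi n)) with hclip
  set g : Fin N → ℝ → ℝ := fun n x => U n x - πp * x with hg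
  have hlohi : ∀ n, dlo n ≤ dhi n := fun n => le_trans (hmem n).1 (hmem n).2
  have hclipmem : ∀ n, clip n ∈ Set.Icc (dlo n) (dhi n) := by
    intro n
    refine ⟨le_max_left _ _, max_le (hlohi n) (min_le_right _ _)⟩
  -- clip n maximizes g n on the interval
  have hclipopt : ∀ n, ∀ x ∈ Set.Icc (dlo n) (dhi n), g n x ≤ g n (clip n) := by
    intro n x hx
    have htan := tangent_le (U n) (L n) (hdiff n) (hL n) (hLanti n) (clip n) x
    have key : (L n (clip n) - πp) * (x - clip n) ≤ 0 := by
      rcases le_or_gt (f n πp) (dlo n) with hcase | hcase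
      · -- clip = dlo
        have hc : clip n = dlo n := by
          simp only [hclip]
          exact max_eq_left (le_trans (min_le_left _ _) hcase)
        rcases eq_or_lt_of_le hcase with heq | hlt
        · have : L n (clip n) = πp := by rw [hc, ← heq, hinv]
          simp [this]
        · have h1 : L n (dlo n) < L n (f n πp) := hLanti n hlt
          rw [hinv] at h1
          have h2 : clip n ≤ x := by rw [hc]; exact hx.1
          nlinarith [h2, hc ▸ h1]
      · rcases le_or_gt (dhi n) (f n πp) with hcase2 | hcase2
        · -- clip = dhi
          have hc : clip n = dhi n := by
            simp only [hclip]
            rw [min_eq_right hcase2]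
            exact max_eq_right (hlohi n)
          rcases eq_or_lt_of_le hcase2 with heq | hlt
          · have : L n (clip n) = πp := by rw [hc, heq, hinv]
            simp [this]
          · have h1 : L n (f n πp) < L n (dhi n) := hLanti n hlt
            rw [hinv] at h1
            have h2 : x ≤ clip n := by rw [hc]; exact hx.2
            nlinarith [h2, hc ▸ h1]
        · -- clip = f n πp
          have hc : clip n = f n πp := by
            simp only [hclip]
            rw [min_eq_left hcase2.le]
            exact max_eq_right hcase.le
          have : L n (clip n) = πp := by rw [hc, hinv]
          simp [this]
    have : L n (clip n) * (x - clip n) - πp * (x - clip n) ≤ 0 := by nlinarith [key]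
    simp only [hg]
    nlinarith [htan, this]
  -- g n is strictly concave
  have hgsc : ∀ n, StrictConcaveOn ℝ Set.univ (g n) := by
    intro n
    have haff : ConcaveOn ℝ Set.univ (fun x : ℝ => -(πp * x)) := by
      refine ⟨convex_univ, ?_⟩
      intro x _ y _ a b _ _ hab
      simp only [smul_eq_mul]
      exact le_of_eq (by ring)
    have h2 := (hU n).add_concaveOn haff
    have hge : g n = (U n) + (fun x : ℝ => -(πp * x)) := by
      funext x; simp [hg, sub_eq_add_neg]
    rw [hge]; exact h2
  -- the objective rewritten
  have hobj : ∀ d : Fin N → ℝ,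
      (∑ n, U n (d n)) - πp * ((∑ n, d n) - G₀) = (∑ n, g n (d n)) + πp * G₀ := by
    intro d
    simp only [hg, Finset.sum_sub_distrib, ← Finset.mul_sum]
    ring
  -- sum comparison: dstar achieves at least the clip value
  have hsumge : ∑ n, g n (clip n) ≤ ∑ n, g n (dstar n) := by
    have := hopt clip hclipmem
    rw [hobj clip, hobj dstar] at this
    linarith
  have hsumle : ∀ n ∈ Finset.univ, g n (dstar n) ≤ g n (clip n) :=
    fun n _ => hclipopt n (dstar n) (hmem n)
  have heq : ∀ n ∈ Finset.univ, g n (dstar n) = g n (clip n) := by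
    have := (Finset.sum_eq_sum_iff_of_le hsumle).mp
      (le_antisymm (Finset.sum_le_sum hsumle) hsumge)
    exact this
  -- dstar n = clip n by strict concavity
  have hdeq : ∀ n, dstar n = clip n := by
    intro n
    by_contra hne
    have hmid : (1/2 : ℝ) • dstar n + (1/2 : ℝ) • clip n ∈ Set.Icc (dlo n) (dhi n) := by
      have h1 := hmem n
      have h2 := hclipmem n
      simp only [smul_eq_mul, Set.mem_Icc] at *
      constructor <;> nlinarith [h1.1, h1.2, h2.1, h2.2]
    have hstrict := (hgsc n).2 (Set.mem_univ (dstar n)) (Set.mem_univ (clip n)) hne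
      (by norm_num : (0:ℝ) < 1/2) (by norm_num : (0:ℝ) < 1/2) (by norm_num)
    have hle := hclipopt n _ hmid
    have heqn := heq n (Finset.mem_univ n)
    have hlt := hstrict.trans_le hle
    rw [heqn] at hlt
    simp only [smul_eq_mul] at hlt
    linarith [hlt]
  have hsum : (∑ n, dstar n) = ∑ n, clip n := Finset.sum_congr rfl (fun n _ => hdeq n)
  refine ⟨by rw [hsum]; linarith, ?_⟩
  intro d hd _
  exact hopt d hd
end
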